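/- arXiv:2204.10974 — 4 statements merged into one kernel-verified Lean document; each statement's English description precedes it below -/
import Mathlib

section
/- Let n ≥ 2, let r ∈ ℝ^n be a strictly positive stochastic vector, and let v ∈ ℝ^n satisfy v_1 ≤ v_2 ≤ ⋯ ≤ v_n. Then Σ_{ℓ=1}^{n−1} (v_{ℓ+1} − v_ℓ)² ≥ (1/n²) · Σ_{i=1}^n r_i (v_i − rᵀv)², where rᵀv = Σ_{j=1}^n r_j v_j. -/
open Finset

/-- For `n ≥ 2`, a strictly positive stochastic vector `r ∈ ℝ^n`, and a sorted vector
`v₀ ≤ v₁ ≤ ⋯ ≤ v_{n−1}` (indices `0,…,n−1`):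
`Σ_{ℓ} (v_{ℓ+1} − v_ℓ)² ≥ (1/n²) Σ_i r_i (v_i − rᵀv)²`. -/
theorem sorted_consecutive_diff_sq_ge (n : ℕ) (hn : 2 ≤ n)
    (r : ℕ → ℝ) (hr_pos : ∀ i < n, 0 < r i) (hr_sum : ∑ i ∈ Finset.range n, r i = 1)
    (v : ℕ → ℝ) (hv : ∀ i, i + 1 < n → v i ≤ v (i + 1)) :
    ∑ l ∈ Finset.range (n - 1), (v (l + 1) - v l) ^ 2 ≥
      (1 / (n : ℝ) ^ 2) *
        ∑ i ∈ Finset.range n, r i * (v i - ∑ j ∈ Finset.range n, r j * v j) ^ 2 := by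
  set m : ℝ := ∑ j ∈ Finset.range n, r j * v j with hm
  -- monotonicity
  have hmono : ∀ i j, i ≤ j → j < n → v i ≤ v j := by
    intro i j hij hjn
    induction j with
    | zero => simp [Nat.le_zero.mp hij]
    | succ k ih =>
      rcases Nat.lt_or_ge i (k+1) with h | h
      · exact le_trans (ih (Nat.lt_succ_iff.mp h) (Nat.lt_of_succ_lt hjn)) (hv k hjn)
      · have : i = k + 1 := le_antisymm hij h
        simp [this]
  have hn1 : 1 ≤ n - 1 := by omega
  have hnn : n - 1 < n := by omega
  have hv0 : ∀ i < n, v 0 ≤ v i := fun i hi => hmono 0 i (Nat.zero_le _) hi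
  have hvt : ∀ i < n, v i ≤ v (n - 1) := fun i hi => hmono i (n-1) (by omega) hnn
  -- m between v 0 and v (n-1)
  have hmlo : v 0 ≤ m := by
    calc v 0 = ∑ j ∈ Finset.range n, r j * v 0 := by
          rw [← Finset.sum_mul, hr_sum, one_mul]
      _ ≤ m := Finset.sum_le_sum fun j hj =>
          mul_le_mul_of_nonneg_left (hv0 j (Finset.mem_range.mp hj))
            (le_of_lt (hr_pos j (Finset.mem_range.mp hj)))
  have hmhi : m ≤ v (n - 1) := by
    calc m ≤ ∑ j ∈ Finset.range n, r j * v (n-1) := Finset.sum_le_sum fun j hj =>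
          mul_le_mul_of_nonneg_left (hvt j (Finset.mem_range.mp hj))
            (le_of_lt (hr_pos j (Finset.mem_range.mp hj)))
      _ = v (n-1) := by rw [← Finset.sum_mul, hr_sum, one_mul]
  -- Step 1: weighted variance ≤ (v(n-1) - v 0)^2
  have h1 : ∑ i ∈ Finset.range n, r i * (v i - m) ^ 2 ≤ (v (n-1) - v 0) ^ 2 := by
    calc ∑ i ∈ Finset.range n, r i * (v i - m) ^ 2
        ≤ ∑ i ∈ Finset.range n, r i * (v (n-1) - v 0) ^ 2 := by
          refine Finset.sum_le_sum fun i hi => ?_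
          have hi' := Finset.mem_range.mp hi
          refine mul_le_mul_of_nonneg_left ?_ (le_of_lt (hr_pos i hi'))
          have h1 : v i - m ≤ v (n-1) - v 0 := by
            have := hvt i hi'; linarith
          have h2 : -(v (n-1) - v 0) ≤ v i - m := by
            have := hv0 i hi'; linarith
          exact sq_le_sq' h2 h1
      _ = (v (n-1) - v 0) ^ 2 := by rw [← Finset.sum_mul, hr_sum, one_mul]
  -- Step 2: telescoping + Cauchy–Schwarz
  have htel : ∑ l ∈ Finset.range (n-1), (v (l+1) - v l) = v (n-1) - v 0 :=
    Finset.sum_range_sub v (n-1)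
  have hcs : (v (n-1) - v 0) ^ 2 ≤
      (n - 1 : ℕ) * ∑ l ∈ Finset.range (n-1), (v (l+1) - v l) ^ 2 := by
    rw [← htel]
    simpa using sq_sum_le_card_mul_sum_sq (s := Finset.range (n-1))
      (f := fun l => v (l+1) - v l)
  have hsumnn : 0 ≤ ∑ l ∈ Finset.range (n-1), (v (l+1) - v l) ^ 2 :=
    Finset.sum_nonneg fun l _ => sq_nonneg _
  have hcard : ((n - 1 : ℕ) : ℝ) ≤ (n : ℝ) ^ 2 := by
    have : ((n - 1 : ℕ) : ℝ) ≤ (n : ℝ) := by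
      exact_mod_cast Nat.cast_le.mpr (Nat.sub_le n 1)
    have h1n : (1:ℝ) ≤ (n:ℝ) := by exact_mod_cast le_trans one_le_two hn
    nlinarith
  have hnpos : (0:ℝ) < (n : ℝ) ^ 2 := by positivity
  rw [ge_iff_le, one_div, inv_mul_le_iff₀ hnpos]
  calc ∑ i ∈ Finset.range n, r i * (v i - m) ^ 2
      ≤ (v (n-1) - v 0) ^ 2 := h1
    _ ≤ ((n-1 : ℕ) : ℝ) * ∑ l ∈ Finset.range (n-1), (v (l+1) - v l) ^ 2 := hcs
    _ ≤ (n : ℝ) ^ 2 * ∑ l ∈ Finset.range (n-1), (v (l+1) - v l) ^ 2 :=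
        mul_le_mul_of_nonneg_right hcard hsumnn
end

section
/- Let {β(t)} be a sequence with β(t) ∈ [0,1] for all t, and let λ > 0 satisfy λβ(k) ≤ 1 for all k. Then for all t ≥ 1, Σ_{q=1}^{t−1} β(q) Π_{k=q+1}^{t−1} (1 − λβ(k))^{1/2} ≤ 2/λ. -/
open Finset

/-- For a sequence `β` with `β(t) ∈ [0,1]` and `λ > 0` with `λβ(k) ≤ 1` for all `k`,
for all `t ≥ 1`: `Σ_{q=1}^{t−1} β(q) Π_{k=q+1}^{t−1} (1 − λβ(k))^{1/2} ≤ 2/λ`. -/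
theorem sum_beta_prod_sqrt_le (β : ℕ → ℝ) (hβ : ∀ k, β k ∈ Set.Icc (0 : ℝ) 1)
    (lam : ℝ) (hlam : 0 < lam) (hlamβ : ∀ k, lam * β k ≤ 1) (t : ℕ) (ht : 1 ≤ t) :
    ∑ q ∈ Finset.Icc 1 (t - 1),
        β q * ∏ k ∈ Finset.Icc (q + 1) (t - 1), Real.sqrt (1 - lam * β k) ≤ 2 / lam := by
  have hP : ∀ a b : ℕ, (0:ℝ) ≤ ∏ k ∈ Finset.Icc a b, Real.sqrt (1 - lam * β k) :=
    fun a b => Finset.prod_nonneg fun k _ => Real.sqrt_nonneg _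
  have key : ∀ n : ℕ,
      ∑ q ∈ Finset.Icc 1 n, β q * ∏ k ∈ Finset.Icc (q+1) n, Real.sqrt (1 - lam * β k)
        ≤ (2/lam) * (1 - ∏ k ∈ Finset.Icc 1 n, Real.sqrt (1 - lam * β k)) := by
    intro n
    induction n with
    | zero => simp
    | succ n ih =>
      set s := Real.sqrt (1 - lam * β (n+1)) with hs
      have hx0 : 0 ≤ lam * β (n+1) := mul_nonneg hlam.le (hβ (n+1)).1
      have hx1 : lam * β (n+1) ≤ 1 := hlamβ (n+1)
      have hs0 : 0 ≤ s := Real.sqrt_nonneg _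
      have hs2 : s^2 = 1 - lam * β (n+1) := Real.sq_sqrt (by linarith)
      have hsle : s ≤ 1 - lam * β (n+1) / 2 := by nlinarith
      have hsum : ∑ q ∈ Finset.Icc 1 (n+1), β q * ∏ k ∈ Finset.Icc (q+1) (n+1),
            Real.sqrt (1 - lam * β k)
          = (∑ q ∈ Finset.Icc 1 n, β q * ∏ k ∈ Finset.Icc (q+1) n,
              Real.sqrt (1 - lam * β k)) * s + β (n+1) := by
        rw [Finset.sum_Icc_succ_top (by omega), Finset.sum_mul]
        congr 1
        · apply Finset.sum_congr rfl
          intro q hq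
          rw [Finset.prod_Icc_succ_top (Nat.succ_le_succ (Finset.mem_Icc.mp hq).2)]
          ring
        · rw [Finset.Icc_eq_empty (by omega)]
          simp
      have hprod : ∏ k ∈ Finset.Icc 1 (n+1), Real.sqrt (1 - lam * β k)
          = (∏ k ∈ Finset.Icc 1 n, Real.sqrt (1 - lam * β k)) * s := by
        rw [Finset.prod_Icc_succ_top (by omega)]
      have h1 := mul_le_mul_of_nonneg_right ih hs0
      have hβle : β (n+1) ≤ 2/lam * (1 - s) := by
        rw [div_mul_eq_mul_div, le_div_iff₀ hlam]
        nlinarith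
      rw [hsum, hprod]
      nlinarith [hP 1 n]
  have := key (t - 1)
  have h2 : (0:ℝ) ≤ 2/lam := by positivity
  nlinarith [hP 1 (t-1)]
end

section
/- Let {β(t)} be a sequence with β(t) ∈ [0,1] for all t, and let λ > 0 satisfy λβ(k) ≤ 1 for all k. Then for all integers 1 ≤ s ≤ T, Σ_{t=s+1}^{T} β(t) Π_{k=s+1}^{t−1} (1 − λβ(k))^{1/2} ≤ 2/λ. -/
open Finset

lemma telescope_aux (a : ℕ → ℝ) (s T : ℕ) (hsT : s ≤ T) :
    ∑ t ∈ Finset.Icc (s + 1) T,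
        (1 - a t) * ∏ k ∈ Finset.Icc (s + 1) (t - 1), a k
      = 1 - ∏ k ∈ Finset.Icc (s + 1) T, a k := by
  induction T, hsT using Nat.le_induction with
  | base => simp
  | succ T hT ih =>
      rw [show T + 1 = (T + 1) by rfl]
      rw [Finset.sum_Icc_succ_top (by omega), Finset.prod_Icc_succ_top (by omega), ih]
      simp only [Nat.add_sub_cancel]
      ring

/-- For a sequence `β` with `β(t) ∈ [0,1]` and `λ > 0` with `λβ(k) ≤ 1` for all `k`,
for all integers `1 ≤ s ≤ T`:
`Σ_{t=s+1}^{T} β(t) Π_{k=s+1}^{t−1} (1 − λβ(k))^{1/2} ≤ 2/λ`. -/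
theorem sum_beta_prod_sqrt_le' (β : ℕ → ℝ) (hβ : ∀ k, β k ∈ Set.Icc (0 : ℝ) 1)
    (lam : ℝ) (hlam : 0 < lam) (hlamβ : ∀ k, lam * β k ≤ 1) (s T : ℕ)
    (hs : 1 ≤ s) (hsT : s ≤ T) :
    ∑ t ∈ Finset.Icc (s + 1) T,
        β t * ∏ k ∈ Finset.Icc (s + 1) (t - 1), Real.sqrt (1 - lam * β k) ≤ 2 / lam := by
  set a : ℕ → ℝ := fun k => Real.sqrt (1 - lam * β k) with ha
  have ha0 : ∀ k, 0 ≤ a k := fun k => Real.sqrt_nonneg _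
  have ha1 : ∀ k, a k ≤ 1 := by
    intro k
    rw [ha]
    have h0 : 0 ≤ lam * β k := mul_nonneg hlam.le (hβ k).1
    calc Real.sqrt (1 - lam * β k) ≤ Real.sqrt 1 := Real.sqrt_le_sqrt (by linarith)
      _ = 1 := Real.sqrt_one
  have hkey : ∀ t, β t ≤ 2 / lam * (1 - a t) := by
    intro t
    have hsq : a t ^ 2 = 1 - lam * β t := Real.sq_sqrt (by linarith [hlamβ t])
    have h2 : lam * β t ≤ 2 * (1 - a t) := by nlinarith [ha0 t, ha1 t]
    rw [div_mul_eq_mul_div, le_div_iff₀ hlam]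
    linarith
  calc ∑ t ∈ Finset.Icc (s + 1) T, β t * ∏ k ∈ Finset.Icc (s + 1) (t - 1), a k
      ≤ ∑ t ∈ Finset.Icc (s + 1) T,
          2 / lam * ((1 - a t) * ∏ k ∈ Finset.Icc (s + 1) (t - 1), a k) := by
        apply Finset.sum_le_sum
        intro t _
        rw [← mul_assoc]
        exact mul_le_mul_of_nonneg_right (hkey t) (Finset.prod_nonneg fun k _ => ha0 k)
    _ = 2 / lam * (1 - ∏ k ∈ Finset.Icc (s + 1) T, a k) := by
        rw [← Finset.mul_sum, telescope_aux a s T hsT]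
    _ ≤ 2 / lam * 1 := by
        apply mul_le_mul_of_nonneg_left _ (by positivity)
        have := Finset.prod_nonneg (fun k (_ : k ∈ Finset.Icc (s+1) T) => ha0 k)
        linarith
    _ = 2 / lam := mul_one _
end

section
/- Let T ≥ 1 be an integer, let α : {1,…,T} → [0,∞) be non-increasing, let β : {1,…,T} → [0,1], and let λ > 0 satisfy λβ(k) ≤ 1 for all k. Then Σ_{t=1}^{T} α(t)β(t) Σ_{s=1}^{t−1} β(s)² Π_{k=s+1}^{t−1} (1 − λβ(k)) ≤ (1/λ) Σ_{s=1}^{T−1} α(s)β(s)². -/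
open Finset

lemma tele_aux (β : ℕ → ℝ) (lam : ℝ) (s : ℕ) :
    ∀ m, s ≤ m →
      ∑ t ∈ Finset.Icc (s + 1) m, lam * β t * ∏ k ∈ Finset.Icc (s + 1) (t - 1), (1 - lam * β k)
        = 1 - ∏ k ∈ Finset.Icc (s + 1) m, (1 - lam * β k) := by
  intro m hm
  induction m, hm using Nat.le_induction with
  | base => rw [Finset.Icc_eq_empty (by omega)]; simp
  | succ m hm ih =>
    rw [Finset.sum_Icc_succ_top (by omega), Finset.prod_Icc_succ_top (by omega), ih]
    simp only [Nat.add_sub_cancel]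
    ring

/-- For `T ≥ 1`, a non-increasing `α : {1,…,T} → [0,∞)`, `β : {1,…,T} → [0,1]`, and
`λ > 0` with `λβ(k) ≤ 1`:
`Σ_{t=1}^{T} α(t)β(t) Σ_{s=1}^{t−1} β(s)² Π_{k=s+1}^{t−1} (1 − λβ(k)) ≤ (1/λ) Σ_{s=1}^{T−1} α(s)β(s)²`. -/
theorem double_sum_exchange_le (T : ℕ) (hT : 1 ≤ T) (α β : ℕ → ℝ)
    (hα_nonneg : ∀ t, 1 ≤ t → t ≤ T → 0 ≤ α t)
    (hα_mono : ∀ s t, 1 ≤ s → s ≤ t → t ≤ T → α t ≤ α s)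
    (hβ : ∀ t, 1 ≤ t → t ≤ T → β t ∈ Set.Icc (0 : ℝ) 1)
    (lam : ℝ) (hlam : 0 < lam) (hlamβ : ∀ k, 1 ≤ k → k ≤ T → lam * β k ≤ 1) :
    ∑ t ∈ Finset.Icc 1 T,
        α t * β t * ∑ s ∈ Finset.Icc 1 (t - 1),
          (β s) ^ 2 * ∏ k ∈ Finset.Icc (s + 1) (t - 1), (1 - lam * β k) ≤
      (1 / lam) * ∑ s ∈ Finset.Icc 1 (T - 1), α s * (β s) ^ 2 := by
  -- distribute and swap the order of summation
  have hswap :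
      ∑ t ∈ Finset.Icc 1 T,
          α t * β t * ∑ s ∈ Finset.Icc 1 (t - 1),
            (β s) ^ 2 * ∏ k ∈ Finset.Icc (s + 1) (t - 1), (1 - lam * β k)
        = ∑ s ∈ Finset.Icc 1 (T - 1), ∑ t ∈ Finset.Icc (s + 1) T,
            α t * β t * ((β s) ^ 2 * ∏ k ∈ Finset.Icc (s + 1) (t - 1), (1 - lam * β k)) := by
    simp_rw [Finset.mul_sum]
    exact Finset.sum_comm' (by
      intro t s
      simp only [Finset.mem_Icc]
      omega)
  rw [hswap, Finset.mul_sum]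
  apply Finset.sum_le_sum
  intro s hs
  simp only [Finset.mem_Icc] at hs
  have hs1 : 1 ≤ s := hs.1
  have hsT : s ≤ T - 1 := hs.2
  -- facts about factors
  have hβnn : ∀ k, 1 ≤ k → k ≤ T → 0 ≤ β k := fun k h1 h2 => (hβ k h1 h2).1
  have hPnn : ∀ a b, 1 ≤ a → b ≤ T → 0 ≤ ∏ k ∈ Finset.Icc a b, (1 - lam * β k) := by
    intro a b ha hb
    apply Finset.prod_nonneg
    intro k hk
    simp only [Finset.mem_Icc] at hk
    have := hlamβ k (by omega) (by omega)
    linarith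
  have hβs2 : (0:ℝ) ≤ (β s) ^ 2 := sq_nonneg _
  have hαs : 0 ≤ α s := hα_nonneg s hs1 (by omega)
  -- bound each term by replacing α t with α s
  have step1 : ∑ t ∈ Finset.Icc (s + 1) T,
      α t * β t * ((β s) ^ 2 * ∏ k ∈ Finset.Icc (s + 1) (t - 1), (1 - lam * β k))
      ≤ α s * (β s) ^ 2 * ∑ t ∈ Finset.Icc (s + 1) T,
          β t * ∏ k ∈ Finset.Icc (s + 1) (t - 1), (1 - lam * β k) := by
    rw [Finset.mul_sum]
    apply Finset.sum_le_sum
    intro t ht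
    simp only [Finset.mem_Icc] at ht
    have h1t : 1 ≤ t := by omega
    have htT : t ≤ T := ht.2
    have hβt : 0 ≤ β t := hβnn t h1t htT
    have hP : 0 ≤ ∏ k ∈ Finset.Icc (s + 1) (t - 1), (1 - lam * β k) := hPnn _ _ (by omega) (by omega)
    have hαts : α t ≤ α s := hα_mono s t hs1 (by omega) htT
    nlinarith [mul_nonneg hβt hP, mul_nonneg hβs2 (mul_nonneg hβt hP)]
  -- telescoping bound for the inner sum
  have step2 : ∑ t ∈ Finset.Icc (s + 1) T,
      β t * ∏ k ∈ Finset.Icc (s + 1) (t - 1), (1 - lam * β k) ≤ 1 / lam := by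
    have key := tele_aux β lam s T (by omega)
    have hPT : 0 ≤ ∏ k ∈ Finset.Icc (s + 1) T, (1 - lam * β k) := hPnn _ _ (by omega) le_rfl
    have hsum : lam * ∑ t ∈ Finset.Icc (s + 1) T,
        β t * ∏ k ∈ Finset.Icc (s + 1) (t - 1), (1 - lam * β k) ≤ 1 := by
      rw [Finset.mul_sum]
      calc ∑ t ∈ Finset.Icc (s + 1) T,
            lam * (β t * ∏ k ∈ Finset.Icc (s + 1) (t - 1), (1 - lam * β k))
          = ∑ t ∈ Finset.Icc (s + 1) T,
            lam * β t * ∏ k ∈ Finset.Icc (s + 1) (t - 1), (1 - lam * β k) := by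
            apply Finset.sum_congr rfl; intro t _; ring
        _ = 1 - ∏ k ∈ Finset.Icc (s + 1) T, (1 - lam * β k) := key
        _ ≤ 1 := by linarith
    rw [le_div_iff₀ hlam]
    linarith [hsum]
  calc ∑ t ∈ Finset.Icc (s + 1) T,
        α t * β t * ((β s) ^ 2 * ∏ k ∈ Finset.Icc (s + 1) (t - 1), (1 - lam * β k))
      ≤ α s * (β s) ^ 2 * ∑ t ∈ Finset.Icc (s + 1) T,
          β t * ∏ k ∈ Finset.Icc (s + 1) (t - 1), (1 - lam * β k) := step1
    _ ≤ α s * (β s) ^ 2 * (1 / lam) := by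
        apply mul_le_mul_of_nonneg_left step2 (mul_nonneg hαs hβs2)
    _ = 1 / lam * (α s * (β s) ^ 2) := by ring
end
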